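/- arXiv:2602.23884 — 2 statements merged into one kernel-verified Lean document; each statement's English description precedes it below -/
import Mathlib

section
/- Let G and H be finite simple graphs with G connected, and let X and Y be vertex covers of the empty bisector graph Ĝ. Then the set S = (⋃_{v_i ∈ X} V(H_i)) ∪ Y is a distance-equalizer set of the corona product G⊙H if and only if (X,Y) is a forward-equalized pair of G (in particular X ∪ Y = V(G)). -/
universe u v

variable {V : Type u} {W : Type v}

/-- A distance-equalizer set of a graph: for every pair of distinct vertices outside `S`
there is a vertex of `S` equidistant to both. -/
def IsDistEqSet {α : Type*} (G : SimpleGraph α) (S : Set α) : Prop :=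
  ∀ ⦃x y : α⦄, x ∉ S → y ∉ S → x ≠ y → ∃ w ∈ S, G.dist w x = G.dist w y

/-- The equidistant dimension of a graph: the minimum cardinality of a distance-equalizer set. -/
noncomputable def eqdim {α : Type*} (G : SimpleGraph α) : ℕ :=
  sInf {n | ∃ S : Set α, IsDistEqSet G S ∧ S.ncard = n}

/-- The bisector of two vertices: vertices equidistant to both. -/
def bisector {α : Type*} (G : SimpleGraph α) (x y : α) : Set α :=
  {w | G.dist w x = G.dist w y}

/-- The empty bisector graph of `G`: two distinct vertices are adjacent iff their bisector
in `G` is empty. -/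
def emptyBisector {α : Type*} (G : SimpleGraph α) : SimpleGraph α where
  Adj x y := x ≠ y ∧ bisector G x y = ∅
  symm := ⟨by
    rintro x y ⟨h1, h2⟩
    refine ⟨h1.symm, Set.eq_empty_iff_forall_notMem.mpr fun w hw => ?_⟩
    exact Set.eq_empty_iff_forall_notMem.mp h2 w
      ((show G.dist w y = G.dist w x from hw).symm)⟩
  loopless := ⟨fun _ h => h.1 rfl⟩

/-- A vertex cover of a graph: a set of vertices meeting every edge. -/
def IsVertexCover {α : Type*} (G : SimpleGraph α) (C : Set α) : Prop :=
  ∀ ⦃x y : α⦄, G.Adj x y → x ∈ C ∨ y ∈ C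

/-- An independent set of a graph: a set of pairwise non-adjacent vertices. -/
def IsIndepSet {α : Type*} (G : SimpleGraph α) (A : Set α) : Prop :=
  ∀ ⦃x y : α⦄, x ∈ A → y ∈ A → ¬ G.Adj x y

/-- The vertex cover number `β(G)`. -/
noncomputable def vcNum {α : Type*} (G : SimpleGraph α) : ℕ :=
  sInf {n | ∃ C : Set α, IsVertexCover G C ∧ C.ncard = n}

/-- The independence number `α(G)`. -/
noncomputable def indepNum {α : Type*} (G : SimpleGraph α) : ℕ :=
  sSup {n | ∃ A : Set α, IsIndepSet G A ∧ A.ncard = n}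

/-- A forward-equalized pair `(X, Y)` of `G`: `X ∪ Y = V(G)` and for every
`a ∈ X \ Y` and `b ∈ Y \ X` there is `w` with `d(w,a) = d(w,b) + 1`. -/
def IsForwardEqualizedPair {α : Type*} (G : SimpleGraph α) (X Y : Set α) : Prop :=
  X ∪ Y = Set.univ ∧
  ∀ ⦃a⦄, a ∈ X \ Y → ∀ ⦃b⦄, b ∈ Y \ X → ∃ w, G.dist w a = G.dist w b + 1

/-- `β*(G)`: the minimum of `|X ∩ Y|` over all pairs of vertex covers `X, Y` of the
empty bisector graph of `G` such that `(X, Y)` is a forward-equalized pair of `G`. -/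
noncomputable def betaStar {α : Type*} (G : SimpleGraph α) : ℕ :=
  sInf {n | ∃ X Y : Set α,
    IsVertexCover (emptyBisector G) X ∧ IsVertexCover (emptyBisector G) Y ∧
    IsForwardEqualizedPair G X Y ∧ (X ∩ Y).ncard = n}

/-- The corona product `G ⊙ H`: one copy of `H` for each vertex `i` of `G` (the vertices
`Sum.inr (i, w)`), with `i` joined to every vertex of its copy. -/
def corona (G : SimpleGraph V) (H : SimpleGraph W) : SimpleGraph (V ⊕ V × W) where
  Adj x y :=
    match x, y with
    | Sum.inl a, Sum.inl b => G.Adj a b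
    | Sum.inl a, Sum.inr p => a = p.1
    | Sum.inr p, Sum.inl a => a = p.1
    | Sum.inr p, Sum.inr q => p.1 = q.1 ∧ H.Adj p.2 q.2
  symm := ⟨by
    rintro (a | p) (b | q) h
    · exact h.symm
    · exact h
    · exact h
    · exact ⟨h.1.symm, h.2.symm⟩⟩
  loopless := ⟨by
    rintro (a | p) h
    · exact G.loopless.irrefl a h
    · exact H.loopless.irrefl p.2 h.2⟩
/-!
Distances in `G ⊙ H` are those of `G` between the base vertices, plus one for each endpoint
lying in a copy of `H` whenever the endpoints are not in the same copy; the lower bounds come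
from a potential that changes by at most one along each edge. A vertex of `S` over `z` therefore
equalizes two vertices over `a` and `b` exactly when `z` does so in `G`, except for a base vertex
`a ∉ Y` against a vertex over `b ∉ X`, which needs `d(z, a) = d(z, b) + 1`. Pairs of the first
kind are handled by the vertex cover hypotheses (two non-adjacent vertices of `Ĝ` have a
nonempty bisector, and a pair inside one copy is equalized by its base vertex), pairs of the
second kind are the forward-equalized condition; taking `a = b` there shows it forces
`X ∪ Y = V(G)`.
-/

open Sum

theorem SimpleGraph.Walk.le_add_length {α : Type*} {K : SimpleGraph α} {g : α → ℕ}
    (hg : ∀ ⦃x y⦄, K.Adj x y → g x ≤ g y + 1) {x y : α} (p : K.Walk x y) :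
    g x ≤ g y + p.length := by
  induction p with
  | nil => simp
  | cons h _ ih => have := hg h; rw [Walk.length_cons]; omega

theorem SimpleGraph.Reachable.le_add_dist {α : Type*} {K : SimpleGraph α} {g : α → ℕ}
    (hg : ∀ ⦃x y⦄, K.Adj x y → g x ≤ g y + 1) {x y : α} (h : K.Reachable x y) :
    g x ≤ g y + K.dist x y := by
  obtain ⟨p, hp⟩ := h.exists_walk_length_eq_dist
  exact hp ▸ p.le_add_length hg

theorem SimpleGraph.Hom.dist_le {α β : Type*} {G : SimpleGraph α} {G' : SimpleGraph β}
    (f : G →g G') {u v : α} (h : G.Reachable u v) : G'.dist (f u) (f v) ≤ G.dist u v := by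
  obtain ⟨p, hp⟩ := h.exists_walk_length_eq_dist
  exact hp ▸ Walk.length_map f p ▸ SimpleGraph.dist_le (p.map f)

theorem SimpleGraph.Adj.dist_le_dist_add_one {α : Type*} {G : SimpleGraph α} {u v : α}
    (h : G.Adj u v) (w : α) : G.dist u w ≤ G.dist v w + 1 := by
  have := h.reachable.dist_triangle_left w
  rw [SimpleGraph.dist_eq_one_iff_adj.2 h] at this
  omega

theorem isForwardEqualizedPair_iff {α : Type*} {G : SimpleGraph α} {X Y : Set α} :
    IsForwardEqualizedPair G X Y ↔
      ∀ ⦃a⦄, a ∉ Y → ∀ ⦃b⦄, b ∉ X → ∃ w, G.dist w a = G.dist w b + 1 := by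
  constructor
  · rintro ⟨hXY, h⟩ a ha b hb
    have mem (c : α) : c ∈ X ∪ Y := hXY ▸ Set.mem_univ c
    exact h ⟨(mem a).resolve_right ha, ha⟩ ⟨(mem b).resolve_left hb, hb⟩
  · intro h
    refine ⟨Set.eq_univ_of_forall fun c => ?_, fun a ha b hb => h ha.2 hb.2⟩
    by_contra hc
    obtain ⟨w, hw⟩ := h (fun hY => hc (.inr hY)) (fun hX => hc (.inl hX))
    omega

theorem IsVertexCover.exists_dist_eq {α : Type*} {G : SimpleGraph α} {C : Set α}
    (hC : IsVertexCover (emptyBisector G) C) {a b : α} (ha : a ∉ C) (hb : b ∉ C)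
    (hab : a ≠ b) :
    ∃ z, G.dist z a = G.dist z b := by
  by_contra! h
  exact (hC ⟨hab, Set.eq_empty_iff_forall_notMem.2 h⟩).elim ha hb

namespace corona

variable (G : SimpleGraph V) (H : SimpleGraph W)

def inlHom : G →g corona G H := ⟨Sum.inl, id⟩

theorem adj_inl_inr (a : V) (w : W) : (corona G H).Adj (inl a) (inr (a, w)) := rfl

end corona

theorem corona_connected {G : SimpleGraph V} (hG : G.Connected) (H : SimpleGraph W) :
    (corona G H).Connected := by
  have := hG.nonempty
  have to_inl : ∀ x, (corona G H).Reachable x (inl (Sum.elim id Prod.fst x)) := by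
    rintro (a | ⟨a, w⟩)
    · rfl
    · exact (corona.adj_inl_inr G H a w).symm.reachable
  exact .mk fun x y => (to_inl x).trans <|
    ((hG _ _).map (corona.inlHom G H)).trans (to_inl y).symm

open Classical in
/-- The distance in `corona G H`, except that two vertices of the same copy of `H` get `0`. -/
noncomputable def coronaDistLowerBound (G : SimpleGraph V) : V ⊕ V × W → V ⊕ V × W → ℕ
  | inl a, inl b => G.dist a b
  | inl a, inr q => G.dist a q.1 + 1
  | inr p, inl b => G.dist p.1 b + 1
  | inr p, inr q => if p.1 = q.1 then 0 else G.dist p.1 q.1 + 2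

section CoronaDist

variable {G : SimpleGraph V} {H : SimpleGraph W}

theorem coronaDistLowerBound_le_add_one_of_adj {x y : V ⊕ V × W} (h : (corona G H).Adj x y)
    (t : V ⊕ V × W) : coronaDistLowerBound G x t ≤ coronaDistLowerBound G y t + 1 := by
  rcases x with a | ⟨a, w⟩ <;> rcases y with c | ⟨c, w'⟩ <;> simp only [corona] at h
  · have := h.dist_le_dist_add_one
    rcases t with b | ⟨b, u⟩ <;> simp only [coronaDistLowerBound] <;> grind
  all_goals
    obtain rfl : a = c := by grind
    rcases t with b | ⟨b, u⟩ <;> simp only [coronaDistLowerBound] <;> grind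

theorem coronaDistLowerBound_le_dist (hG : G.Connected) (x t : V ⊕ V × W) :
    coronaDistLowerBound G x t ≤ (corona G H).dist x t := by
  have hg := ((corona_connected hG H) x t).le_add_dist (g := (coronaDistLowerBound G · t))
    fun _ _ h => coronaDistLowerBound_le_add_one_of_adj h t
  rcases t with b | ⟨b, u⟩ <;> simpa [coronaDistLowerBound] using hg

theorem dist_corona_inl_inl (hG : G.Connected) (a b : V) :
    (corona G H).dist (inl a) (inl b) = G.dist a b :=
  le_antisymm ((corona.inlHom G H).dist_le (hG a b))
    (coronaDistLowerBound_le_dist hG (inl a) (inl b))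

theorem dist_corona_inl_inr (hG : G.Connected) (a b : V) (w : W) :
    (corona G H).dist (inl a) (inr (b, w)) = G.dist a b + 1 := by
  refine le_antisymm ?_ (coronaDistLowerBound_le_dist hG (inl a) (inr (b, w)))
  calc (corona G H).dist (inl a) (inr (b, w))
      ≤ (corona G H).dist (inl a) (inl b) + (corona G H).dist (inl b) (inr (b, w)) :=
        (corona_connected hG H).dist_triangle
    _ = G.dist a b + 1 := by
        rw [dist_corona_inl_inl hG,
          SimpleGraph.dist_eq_one_iff_adj.2 (corona.adj_inl_inr G H b w)]

theorem dist_corona_inr_inl (hG : G.Connected) (a b : V) (w : W) :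
    (corona G H).dist (inr (a, w)) (inl b) = G.dist a b + 1 := by
  rw [SimpleGraph.dist_comm, dist_corona_inl_inr hG, SimpleGraph.dist_comm]

theorem dist_corona_inr_inr_of_ne (hG : G.Connected) {a b : V} (hab : a ≠ b) (w w' : W) :
    (corona G H).dist (inr (a, w)) (inr (b, w')) = G.dist a b + 2 := by
  refine le_antisymm ?_ (by simpa [coronaDistLowerBound, hab] using
    coronaDistLowerBound_le_dist (H := H) hG (inr (a, w)) (inr (b, w')))
  calc (corona G H).dist (inr (a, w)) (inr (b, w'))
      ≤ (corona G H).dist (inr (a, w)) (inl a) + (corona G H).dist (inl a) (inr (b, w')) :=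
        (corona_connected hG H).dist_triangle
    _ = G.dist a b + 2 := by
        rw [dist_corona_inl_inr hG,
          SimpleGraph.dist_eq_one_iff_adj.2 (corona.adj_inl_inr G H a w).symm]
        omega

end CoronaDist

section CoronaSet

variable {G : SimpleGraph V} {H : SimpleGraph W} {X Y : Set V}

/-- The set `(⋃_{v ∈ X} V(H_v)) ∪ Y` of `G ⊙ H`. -/
def coronaSet (X Y : Set V) : Set (V ⊕ V × W) :=
  {x : V ⊕ V × W | ∃ v ∈ X, ∃ w : W, x = Sum.inr (v, w)} ∪ Sum.inl '' Y

@[simp]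
theorem inl_mem_coronaSet {c : V} : (inl c : V ⊕ V × W) ∈ coronaSet X Y ↔ c ∈ Y := by
  simp [coronaSet]

@[simp]
theorem inr_mem_coronaSet {v : V} {w : W} :
    (inr (v, w) : V ⊕ V × W) ∈ coronaSet X Y ↔ v ∈ X := by
  simp [coronaSet]

theorem exists_dist_eq_dist_add_one_of_isDistEqSet [Nonempty W] (hG : G.Connected)
    (hS : IsDistEqSet (corona G H) (coronaSet X Y)) {a b : V} (ha : a ∉ Y) (hb : b ∉ X) :
    ∃ z, G.dist z a = G.dist z b + 1 := by
  obtain ⟨w⟩ := ‹Nonempty W›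
  obtain ⟨s, hs, hd⟩ := hS (x := inl a) (y := inr (b, w)) (by simpa) (by simpa) inl_ne_inr
  rcases s with z | ⟨z, u⟩
  · exact ⟨z, by rwa [dist_corona_inl_inl hG, dist_corona_inl_inr hG] at hd⟩
  · have hzb : z ≠ b := by rintro rfl; exact hb (inr_mem_coronaSet.1 hs)
    rw [dist_corona_inr_inl hG, dist_corona_inr_inr_of_ne hG hzb] at hd
    exact ⟨z, by omega⟩

theorem exists_mem_coronaSet_dist_eq [Nonempty W] (hG : G.Connected) (hXY : X ∪ Y = Set.univ)
    (z : V) : ∃ s ∈ coronaSet X Y, ∃ k : ℕ,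
      (∀ a, (corona G H).dist s (inl a) = G.dist z a + k) ∧
      ∀ b ∉ X, ∀ w, (corona G H).dist s (inr (b, w)) = G.dist z b + 1 + k := by
  obtain ⟨w₀⟩ := ‹Nonempty W›
  by_cases hzY : z ∈ Y
  · exact ⟨inl z, by simpa, 0, fun a => dist_corona_inl_inl hG z a,
      fun b _ w => dist_corona_inl_inr hG z b w⟩
  · have hzX : z ∈ X := (hXY ▸ Set.mem_univ z : z ∈ X ∪ Y).resolve_right hzY
    refine ⟨inr (z, w₀), by simpa, 1, fun a => dist_corona_inr_inl hG z a w₀,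
      fun b hb w => ?_⟩
    rw [dist_corona_inr_inr_of_ne hG (by rintro rfl; exact hb hzX)]

theorem isDistEqSet_coronaSet [Nonempty W] (hG : G.Connected)
    (hX : IsVertexCover (emptyBisector G) X) (hY : IsVertexCover (emptyBisector G) Y)
    (hP : IsForwardEqualizedPair G X Y) : IsDistEqSet (corona G H) (coronaSet X Y) := by
  have shift := exists_mem_coronaSet_dist_eq (H := H) hG hP.1
  have fwd := isForwardEqualizedPair_iff.1 hP
  rintro (a | ⟨a, w⟩) (b | ⟨b, w'⟩) ha hb hne <;>
    simp only [inl_mem_coronaSet, inr_mem_coronaSet] at ha hb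
  · obtain ⟨z, hz⟩ := hY.exists_dist_eq ha hb (by rintro rfl; exact hne rfl)
    obtain ⟨s, hs, k, hl, -⟩ := shift z
    exact ⟨s, hs, by rw [hl, hl, hz]⟩
  · obtain ⟨z, hz⟩ := fwd ha hb
    obtain ⟨s, hs, k, hl, hr⟩ := shift z
    exact ⟨s, hs, by rw [hl, hr b hb, hz]⟩
  · obtain ⟨z, hz⟩ := fwd hb ha
    obtain ⟨s, hs, k, hl, hr⟩ := shift z
    exact ⟨s, hs, by rw [hl, hr a ha, hz]⟩
  · by_cases hab : a = b
    · subst hab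
      have haY : a ∈ Y := (hP.1 ▸ Set.mem_univ a : a ∈ X ∪ Y).resolve_left ha
      exact ⟨inl a, by simpa, by rw [dist_corona_inl_inr hG, dist_corona_inl_inr hG]⟩
    · obtain ⟨z, hz⟩ := hX.exists_dist_eq ha hb hab
      obtain ⟨s, hs, k, -, hr⟩ := shift z
      exact ⟨s, hs, by rw [hr a ha, hr b hb, hz]⟩

end CoronaSet

theorem corona_distEqSet_iff_forwardEqualizedPair_general [Nonempty W]
    (G : SimpleGraph V) (H : SimpleGraph W) (hG : G.Connected)
    (X Y : Set V) (hX : IsVertexCover (emptyBisector G) X)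
    (hY : IsVertexCover (emptyBisector G) Y) :
    IsDistEqSet (corona G H)
      ({x : V ⊕ V × W | ∃ v ∈ X, ∃ w : W, x = Sum.inr (v, w)} ∪ Sum.inl '' Y) ↔
    IsForwardEqualizedPair G X Y :=
  ⟨fun hS => isForwardEqualizedPair_iff.2 fun _ ha _ hb =>
      exists_dist_eq_dist_add_one_of_isDistEqSet hG hS ha hb,
    isDistEqSet_coronaSet hG hX hY⟩

/-- For vertex covers `X, Y` of the empty bisector graph `Ĝ`, the set
`S = (⋃_{v ∈ X} V(H_v)) ∪ Y` is a distance-equalizer set of `G ⊙ H` iff `(X, Y)` is a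
forward-equalized pair of `G` (in particular `X ∪ Y = V(G)`). -/
theorem corona_distEqSet_iff_forwardEqualizedPair [Fintype V] [Fintype W] [Nonempty W]
    (G : SimpleGraph V) (H : SimpleGraph W) (hG : G.Connected)
    (X Y : Set V) (hX : IsVertexCover (emptyBisector G) X)
    (hY : IsVertexCover (emptyBisector G) Y) :
    IsDistEqSet (corona G H)
      ({x : V ⊕ V × W | ∃ v ∈ X, ∃ w : W, x = Sum.inr (v, w)} ∪ Sum.inl '' Y) ↔
    IsForwardEqualizedPair G X Y :=
  corona_distEqSet_iff_forwardEqualizedPair_general G H hG X Y hX hY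
end

section
/- For any two finite simple graphs G and H with G connected, ξ(G⊙H) ≥ β(Ĝ)·n(H) + α(Ĝ) + β*(G). -/
universe u v

variable {V : Type u} {W : Type v}

/-!
The copy `H_i` of the corona is entered only through `v_i`, so corona distances are
`d_G` plus `0`, `1` or `2` according as the endpoints lie in `G` or in copies of `H`.
Comparing the pairs a distance-equalizer set `S` must equalize with these distances: the
vertices `i` whose whole copy lies in `S` form a vertex cover `F` of `Ĝ`, so does the set `X`
of vertices of `G` lying in `S`, and with `K` the set of `i` whose copy meets `S`, the pair
`(K, X)` is forward-equalized. Then `|S| ≥ |F|·n(H) + |K \ F| + |X|`,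
`|K| + |X| = n(G) + |K ∩ X|` and `n(G) ≥ α(Ĝ) + β(Ĝ)` give the bound.
-/

namespace SimpleGraph

variable {α : Type*} {G : SimpleGraph α}

theorem Walk.le_add_length_s6 {f : α → ℕ} (hf : ∀ ⦃u v⦄, G.Adj u v → f u ≤ f v + 1) {a b : α}
    (p : G.Walk a b) : f a ≤ f b + p.length := by
  induction p with
  | nil => simp
  | cons h _ ih => rw [Walk.length_cons]; linarith [hf h]

theorem Reachable.le_add_dist_s6 {f : α → ℕ} (hf : ∀ ⦃u v⦄, G.Adj u v → f u ≤ f v + 1)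
    {a b : α} (h : G.Reachable a b) : f a ≤ f b + G.dist a b := by
  obtain ⟨p, hp⟩ := h.exists_walk_length_eq_dist
  exact hp ▸ p.le_add_length_s6 hf

/-- If every edge entering `C` comes from `x`, every path into `C` passes through `x`. -/
theorem Reachable.dist_add_one_le_of_adj_mem {C : Set α} {x : α} (hx : x ∉ C)
    (hC : ∀ ⦃u v⦄, G.Adj u v → u ∉ C → v ∈ C → u = x) {u c : α} (h : G.Reachable u c)
    (hu : u ∉ C) (hc : c ∈ C) : G.dist u x + 1 ≤ G.dist u c := by
  classical
  have hf : ∀ ⦃v v'⦄, G.Adj v v' →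
      (if v ∈ C then 0 else G.dist v x + 1) ≤ (if v' ∈ C then 0 else G.dist v' x + 1) + 1 := by
    intro v v' hvv'
    by_cases hv : v ∈ C
    · simp [hv]
    by_cases hv' : v' ∈ C
    · simp [hv', hx, hC hvv' hv hv']
    have := hvv'.reachable.dist_triangle_left x
    simp only [hv, hv', if_false, dist_eq_one_iff_adj.mpr hvv'] at this ⊢
    omega
  simpa [hu, hc] using h.le_add_dist_s6 hf

end SimpleGraph

theorem Set.ncard_preimage_inl_add_ncard_preimage_inr {α β : Type*} [Finite α] [Finite β]
    (s : Set (α ⊕ β)) : (Sum.inl ⁻¹' s).ncard + (Sum.inr ⁻¹' s).ncard = s.ncard := by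
  conv_rhs => rw [← Set.image_preimage_inl_union_image_preimage_inr s]
  rw [Set.ncard_union_eq Set.disjoint_image_inl_image_inr,
    Set.ncard_image_of_injective _ Sum.inl_injective,
    Set.ncard_image_of_injective _ Sum.inr_injective]

theorem Set.ncard_full_fibers_mul_add_le {α β : Type*} [Finite α] [Finite β] (T : Set (α × β)) :
    {a | ∀ b, (a, b) ∈ T}.ncard * Nat.card β +
      ({a | ∃ b, (a, b) ∈ T} \ {a | ∀ b, (a, b) ∈ T}).ncard ≤ T.ncard := by
  set F := {a | ∀ b, (a, b) ∈ T}
  have hsub : F ×ˢ Set.univ ⊆ T := fun p hp => hp.1 p.2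
  have himage : {a | ∃ b, (a, b) ∈ T} \ F ⊆ Prod.fst '' (T \ F ×ˢ Set.univ) :=
    fun a ⟨⟨b, hb⟩, haF⟩ => ⟨(a, b), ⟨hb, fun h => haF h.1⟩, rfl⟩
  calc F.ncard * Nat.card β + ({a | ∃ b, (a, b) ∈ T} \ F).ncard
      ≤ (F ×ˢ Set.univ).ncard + (T \ F ×ˢ Set.univ).ncard := by
        rw [Set.ncard_prod, Set.ncard_univ]
        exact Nat.add_le_add_left ((Set.ncard_le_ncard himage).trans Set.ncard_image_le) _
    _ = T.ncard := by rw [add_comm, Set.ncard_sdiff_add_ncard_of_subset hsub]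

section VertexCover

variable {α : Type*} {G : SimpleGraph α}

theorem IsVertexCover.mono {C D : Set α} (hC : IsVertexCover G C) (hCD : C ⊆ D) :
    IsVertexCover G D :=
  fun _ _ h => (hC h).imp (@hCD _) (@hCD _)

theorem IsIndepSet.isVertexCover_compl {A : Set α} (hA : IsIndepSet G A) :
    IsVertexCover G Aᶜ := fun x y hxy => by
  by_contra! h
  simp only [Set.mem_compl_iff, not_not] at h
  exact hA h.1 h.2 hxy

theorem indepNum_add_vcNum_le [Finite α] (G : SimpleGraph α) :
    indepNum G + vcNum G ≤ Nat.card α := by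
  have hmem : indepNum G ∈ {n | ∃ A : Set α, IsIndepSet G A ∧ A.ncard = n} :=
    Nat.sSup_mem ⟨0, ∅, by simp [IsIndepSet]⟩
      ⟨Nat.card α, by rintro _ ⟨A, -, rfl⟩; exact Set.ncard_le_card A⟩
  obtain ⟨A, hA, hcard⟩ := hmem
  have : vcNum G ≤ Aᶜ.ncard := Nat.sInf_le ⟨Aᶜ, hA.isVertexCover_compl, rfl⟩
  rw [← hcard, ← Set.ncard_add_ncard_compl A]
  omega

end VertexCover

theorem emptyBisector_adj_iff {α : Type*} {G : SimpleGraph α} {x y : α} :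
    (emptyBisector G).Adj x y ↔ x ≠ y ∧ ∀ w, G.dist w x ≠ G.dist w y := by
  simp [emptyBisector, bisector, Set.eq_empty_iff_forall_notMem]

section CoronaDist

variable {G : SimpleGraph V} {H : SimpleGraph W}

def corona.inlHom_s6 (G : SimpleGraph V) (H : SimpleGraph W) : G →g corona G H where
  toFun := Sum.inl
  map_rel' h := h

theorem corona_adj_inl_inr_self (i : V) (w : W) :
    (corona G H).Adj (Sum.inl i) (Sum.inr (i, w)) :=
  rfl

theorem corona_preconnected (hG : G.Preconnected) : (corona G H).Preconnected := by
  have hbase : ∀ a, ∃ i, (corona G H).Reachable a (Sum.inl i) := by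
    rintro (i | ⟨i, w⟩)
    · exact ⟨i, .rfl⟩
    · exact ⟨i, (corona_adj_inl_inr_self i w).symm.reachable⟩
  intro a b
  obtain ⟨i, hi⟩ := hbase a
  obtain ⟨j, hj⟩ := hbase b
  exact hi.trans (((hG i j).map (corona.inlHom_s6 G H)).trans hj.symm)

theorem corona_dist_inl (hG : G.Preconnected) (a : V ⊕ V × W) (i : V) :
    (corona G H).dist a (Sum.inl i) = Sum.elim (G.dist · i) (G.dist ·.1 i + 1) a := by
  have hinl : ∀ k, (corona G H).dist (Sum.inl k) (Sum.inl i) ≤ G.dist k i := fun k => by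
    obtain ⟨p, hp⟩ := (hG k i).exists_walk_length_eq_dist
    exact (SimpleGraph.dist_le (p.map (corona.inlHom_s6 G H))).trans_eq
      (by rw [SimpleGraph.Walk.length_map, hp])
  have hf : ∀ ⦃u v⦄, (corona G H).Adj u v → Sum.elim (G.dist · i) (G.dist ·.1 i + 1) u ≤
      Sum.elim (G.dist · i) (G.dist ·.1 i + 1) v + 1 := by
    rintro (k | ⟨k, x⟩) (l | ⟨l, y⟩) h
    · replace h : G.Adj k l := h
      have := h.reachable.dist_triangle_left i
      simp only [Sum.elim_inl, SimpleGraph.dist_eq_one_iff_adj.mpr h] at this ⊢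
      omega
    · obtain rfl : k = l := h
      simp only [Sum.elim_inl, Sum.elim_inr]
      omega
    · obtain rfl : l = k := h
      rfl
    · obtain rfl : k = l := h.1
      exact Nat.le_succ _
  refine le_antisymm ?_ (by simpa using ((corona_preconnected hG) a (Sum.inl i)).le_add_dist_s6 hf)
  rcases a with k | ⟨k, x⟩
  · exact hinl k
  · have hadj := (corona_adj_inl_inr_self (G := G) (H := H) k x).symm
    have := hadj.reachable.dist_triangle_left (Sum.inl i)
    rw [SimpleGraph.dist_eq_one_iff_adj.mpr hadj] at this
    have := hinl k
    simp only [Sum.elim_inr]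
    omega

/-- The copy of `H` at `i` is entered only through `i`. -/
theorem corona_dist_inr (hG : G.Preconnected) {a : V ⊕ V × W} {i : V}
    (ha : ∀ w, a ≠ Sum.inr (i, w)) (w : W) :
    (corona G H).dist a (Sum.inr (i, w)) = (corona G H).dist a (Sum.inl i) + 1 := by
  have hcut : ∀ ⦃u v⦄, (corona G H).Adj u v → u ∉ Set.range (fun w => Sum.inr (i, w)) →
      v ∈ Set.range (fun w => Sum.inr (i, w)) → u = Sum.inl i := by
    rintro (k | ⟨k, x⟩) _ h hu ⟨y, rfl⟩
    · exact congrArg Sum.inl h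
    · obtain rfl : k = i := h.1
      exact absurd ⟨x, rfl⟩ hu
  refine le_antisymm ?_ (((corona_preconnected hG) a _).dist_add_one_le_of_adj_mem
    (by simp) hcut (by simpa [eq_comm] using ha) ⟨w, rfl⟩)
  have := (corona_adj_inl_inr_self (G := G) (H := H) i w).reachable.dist_triangle_right a
  rwa [SimpleGraph.dist_eq_one_iff_adj.mpr (corona_adj_inl_inr_self i w)] at this

theorem corona_exists_dist_eq_add_of_dist_inl_eq (hG : G.Preconnected) {s : V ⊕ V × W}
    {i j : V} {n : ℕ}
    (h : (corona G H).dist s (Sum.inl i) = (corona G H).dist s (Sum.inl j) + n) :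
    ∃ k, G.dist k i = G.dist k j + n := by
  rw [corona_dist_inl hG, corona_dist_inl hG] at h
  rcases s with k | ⟨k, x⟩
  · exact ⟨k, h⟩
  · exact ⟨k, by simp only [Sum.elim_inr] at h; omega⟩

theorem corona_dist_inr_inr_ne (hG : G.Preconnected) {i j : V} (hij : i ≠ j) (x w w' : W) :
    (corona G H).dist (Sum.inr (i, x)) (Sum.inr (i, w)) ≠
      (corona G H).dist (Sum.inr (i, x)) (Sum.inr (j, w')) := by
  have hsame : (corona G H).dist (Sum.inr (i, x)) (Sum.inr (i, w)) ≤ 2 :=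
    SimpleGraph.dist_le
      ((corona_adj_inl_inr_self i x).symm.toWalk.concat (corona_adj_inl_inr_self i w))
  rw [corona_dist_inr (i := j) hG (by simp [hij]), corona_dist_inl hG]
  have := (hG i j).pos_dist_of_ne hij
  simp only [Sum.elim_inr]
  omega

end CoronaDist

section CoronaEqualizer

variable {G : SimpleGraph V} {H : SimpleGraph W} {S : Set (V ⊕ V × W)}

theorem IsDistEqSet.isVertexCover_emptyBisector_full_copies (hG : G.Preconnected)
    (hS : IsDistEqSet (corona G H) S) :
    IsVertexCover (emptyBisector G) {i | ∀ w, Sum.inr (i, w) ∈ S} := by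
  intro i j hij
  obtain ⟨hne, hbis⟩ := emptyBisector_adj_iff.mp hij
  by_contra! hout
  obtain ⟨⟨w, hw⟩, ⟨w', hw'⟩⟩ : (∃ w, Sum.inr (i, w) ∉ S) ∧ ∃ w', Sum.inr (j, w') ∉ S := by
    simpa using hout
  obtain ⟨s, -, hd⟩ := hS hw hw' (by simp [hne])
  by_cases hsi : ∃ x, s = Sum.inr (i, x)
  · obtain ⟨x, rfl⟩ := hsi
    exact corona_dist_inr_inr_ne hG hne x w w' hd
  by_cases hsj : ∃ x, s = Sum.inr (j, x)
  · obtain ⟨x, rfl⟩ := hsj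
    exact corona_dist_inr_inr_ne hG hne.symm x w' w hd.symm
  push Not at hsi hsj
  rw [corona_dist_inr hG hsi, corona_dist_inr hG hsj] at hd
  obtain ⟨k, hk⟩ := corona_exists_dist_eq_add_of_dist_inl_eq (n := 0) hG (Nat.add_right_cancel hd)
  exact hbis k hk

theorem IsDistEqSet.isVertexCover_emptyBisector_inl_preimage (hG : G.Preconnected)
    (hS : IsDistEqSet (corona G H) S) : IsVertexCover (emptyBisector G) (Sum.inl ⁻¹' S) := by
  intro i j hij
  obtain ⟨hne, hbis⟩ := emptyBisector_adj_iff.mp hij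
  by_contra! hout
  obtain ⟨s, -, hd⟩ := hS hout.1 hout.2 (by simp [hne])
  obtain ⟨k, hk⟩ := corona_exists_dist_eq_add_of_dist_inl_eq (n := 0) hG hd
  exact hbis k hk

theorem IsDistEqSet.isForwardEqualizedPair [Nonempty W] (hG : G.Preconnected)
    (hS : IsDistEqSet (corona G H) S) :
    IsForwardEqualizedPair G {i | ∃ w, Sum.inr (i, w) ∈ S} (Sum.inl ⁻¹' S) := by
  have hoff : ∀ {s i}, s ∈ S → i ∉ {i | ∃ w, Sum.inr (i, w) ∈ S} →
      ∀ x, s ≠ Sum.inr (i, x) := fun hs hi x hx => hi ⟨x, hx ▸ hs⟩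
  let w₀ := Classical.arbitrary W
  refine ⟨Set.eq_univ_of_forall fun i => ?_, fun a ha b hb => ?_⟩
  · by_contra! hout
    obtain ⟨hiK, hiX⟩ := not_or.mp hout
    obtain ⟨s, hs, hd⟩ := hS hiX (fun h => hiK ⟨w₀, h⟩) Sum.inl_ne_inr
    rw [corona_dist_inr hG (hoff hs hiK)] at hd
    omega
  · obtain ⟨s, hs, hd⟩ := hS ha.2 (fun h => hb.2 ⟨w₀, h⟩) Sum.inl_ne_inr
    rw [corona_dist_inr hG (hoff hs hb.2)] at hd
    exact corona_exists_dist_eq_add_of_dist_inl_eq hG hd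

end CoronaEqualizer

/-- `ξ(G ⊙ H) ≥ β(Ĝ)·n(H) + α(Ĝ) + β*(G)`. -/
theorem eqdim_corona_lower_bound [Fintype V] [Fintype W] [Nonempty W]
    (G : SimpleGraph V) (H : SimpleGraph W) (hG : G.Connected) :
    vcNum (emptyBisector G) * Fintype.card W + indepNum (emptyBisector G) + betaStar G ≤
      eqdim (corona G H) := by
  refine le_csInf ⟨_, Set.univ, fun _ _ hx _ _ => absurd (Set.mem_univ _) hx, rfl⟩ ?_
  rintro _ ⟨S, hS, rfl⟩
  set F := {i | ∀ w, Sum.inr (i, w) ∈ S}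
  set K := {i | ∃ w, Sum.inr (i, w) ∈ S}
  set X := Sum.inl ⁻¹' S
  have hFK : F ⊆ K := fun i hi => ⟨Classical.arbitrary W, hi _⟩
  have hF := hS.isVertexCover_emptyBisector_full_copies hG.preconnected
  have hfwd := hS.isForwardEqualizedPair hG.preconnected
  have hβ : vcNum (emptyBisector G) ≤ F.ncard := Nat.sInf_le ⟨F, hF, rfl⟩
  have hβ' : betaStar G ≤ (K ∩ X).ncard := Nat.sInf_le ⟨K, X, hF.mono hFK,
    hS.isVertexCover_emptyBisector_inl_preimage hG.preconnected, hfwd, rfl⟩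
  have hαβ := indepNum_add_vcNum_le (emptyBisector G)
  have hKX := Set.ncard_union_add_ncard_inter K X
  have hKF := Set.ncard_sdiff_add_ncard_of_subset hFK
  have hcopies : F.ncard * Nat.card W + (K \ F).ncard ≤ (Sum.inr ⁻¹' S).ncard :=
    Set.ncard_full_fibers_mul_add_le (Sum.inr ⁻¹' S)
  have hS_card := Set.ncard_preimage_inl_add_ncard_preimage_inr S
  rw [hfwd.1, Set.ncard_univ] at hKX
  rw [Nat.card_eq_fintype_card] at hαβ hKX hcopies
  nlinarith [Fintype.card_pos (α := W)]
end
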